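/- arXiv:2404.06712 — 2 statements merged into one kernel-verified Lean document; each statement's English description precedes it below -/
import Mathlib

section
/- Let n ≥ 1, let 0 < a ≤ b, and let R be an n×n real symmetric matrix with eigenvalues e₁, …, eₙ (repeated according to multiplicity). Then inf{ tr(PR) : P an n×n real symmetric matrix with aI ≤ P ≤ bI } = a·Σ_{eᵢ>0} eᵢ + b·Σ_{eᵢ<0} eᵢ = P⁻(R, a, b), and sup{ tr(PR) : P an n×n real symmetric matrix with aI ≤ P ≤ bI } = a·Σ_{eᵢ<0} eᵢ + b·Σ_{eᵢ>0} eᵢ = P⁺(R, a, b). -/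
open Set

noncomputable section

/-- The operator norm of an `n × n` real matrix, acting on Euclidean space. -/
noncomputable def matOpNorm {n : ℕ} (A : Matrix (Fin n) (Fin n) ℝ) : ℝ :=
  ‖(LinearMap.toContinuousLinearMap (Matrix.toEuclideanLin A))‖

/-- `F` is uniformly elliptic with ellipticity constant `Λ`. -/
def UniformlyElliptic {n : ℕ} (Λ : ℝ) (F : Matrix (Fin n) (Fin n) ℝ → ℝ) : Prop :=
  ∀ M N : Matrix (Fin n) (Fin n) ℝ, M.IsSymm → N.IsSymm → N.PosSemidef →
    Λ⁻¹ * matOpNorm N ≤ F (M + N) - F M ∧ F (M + N) - F M ≤ Λ * matOpNorm N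

/-- Pucci minimal operator `P⁻(R, a, b) = a ∑_{eᵢ>0} eᵢ + b ∑_{eᵢ<0} eᵢ`. -/
noncomputable def pucciMinus {n : ℕ} (R : Matrix (Fin n) (Fin n) ℝ) (a b : ℝ) : ℝ :=
  if h : R.IsHermitian then
    a * ∑ i, max (h.eigenvalues i) 0 + b * ∑ i, min (h.eigenvalues i) 0
  else 0

/-- Pucci maximal operator `P⁺(R, a, b) = a ∑_{eᵢ<0} eᵢ + b ∑_{eᵢ>0} eᵢ`. -/
noncomputable def pucciPlus {n : ℕ} (R : Matrix (Fin n) (Fin n) ℝ) (a b : ℝ) : ℝ :=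
  if h : R.IsHermitian then
    a * ∑ i, min (h.eigenvalues i) 0 + b * ∑ i, max (h.eigenvalues i) 0
  else 0

end

/-! Diagonalise `R = U diag(e) Uᵀ` with `U` orthogonal. Then `tr(P R) = ∑ qᵢ eᵢ` with
`qᵢ = (Uᵀ P U)ᵢᵢ`, and since `a I ≤ P ≤ b I` is preserved by orthogonal conjugation, every
`qᵢ` lies in `[a, b]`; conversely each `q ∈ [a, b]ⁿ` is realised by `P = U diag(q) Uᵀ`. So the
values of `tr(P R)` form the image of the box `[a, b]ⁿ` under the linear form `q ↦ ∑ qᵢ eᵢ`,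
which is extremal coordinatewise: the minimum takes `qᵢ = a` where `eᵢ > 0` and `qᵢ = b`
where `eᵢ < 0`, the maximum the other way round. -/

open Matrix
open scoped MatrixOrder

lemma mul_max_add_mul_min_le_mul {a b q e : ℝ} (haq : a ≤ q) (hqb : q ≤ b) :
    a * max e 0 + b * min e 0 ≤ q * e := by
  rcases le_total e 0 with h | h <;> simp [h] <;> nlinarith

lemma mul_le_mul_min_add_mul_max {a b q e : ℝ} (haq : a ≤ q) (hqb : q ≤ b) :
    q * e ≤ a * min e 0 + b * max e 0 := by
  rcases le_total e 0 with h | h <;> simp [h] <;> nlinarith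

section Box

variable {ι : Type*} [Fintype ι] {a b : ℝ}

theorem isLeast_image_sum_mul_pi_Icc (hab : a ≤ b) (e : ι → ℝ) :
    IsLeast ((fun c ↦ ∑ i, c i * e i) '' univ.pi fun _ ↦ Icc a b)
      (∑ i, (a * max (e i) 0 + b * min (e i) 0)) := by
  refine ⟨⟨fun i ↦ if 0 < e i then a else b, fun i _ ↦ ?_,
    Finset.sum_congr rfl fun i _ ↦ ?_⟩, ?_⟩
  · dsimp only; split_ifs <;> simp [hab]
  · dsimp only; split_ifs with h
    · simp [h.le]
    · simp [not_lt.1 h]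
  · rintro _ ⟨c, hc, rfl⟩
    exact Finset.sum_le_sum fun i _ ↦
      mul_max_add_mul_min_le_mul (hc i trivial).1 (hc i trivial).2

theorem isGreatest_image_sum_mul_pi_Icc (hab : a ≤ b) (e : ι → ℝ) :
    IsGreatest ((fun c ↦ ∑ i, c i * e i) '' univ.pi fun _ ↦ Icc a b)
      (∑ i, (a * min (e i) 0 + b * max (e i) 0)) := by
  refine ⟨⟨fun i ↦ if e i < 0 then a else b, fun i _ ↦ ?_,
    Finset.sum_congr rfl fun i _ ↦ ?_⟩, ?_⟩
  · dsimp only; split_ifs <;> simp [hab]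
  · dsimp only; split_ifs with h
    · simp [h.le]
    · simp [not_lt.1 h]
  · rintro _ ⟨c, hc, rfl⟩
    exact Finset.sum_le_sum fun i _ ↦
      mul_le_mul_min_add_mul_max (hc i trivial).1 (hc i trivial).2

end Box

variable {ι : Type*} [DecidableEq ι]

namespace Matrix

lemma diag_mem_Icc_of_le {a b : ℝ} {Q : Matrix ι ι ℝ} (haQ : a • 1 ≤ Q) (hQb : Q ≤ b • 1)
    (i : ι) : Q i i ∈ Icc a b := by
  have hl := (le_iff.1 haQ).diag_nonneg (i := i)
  have hu := (le_iff.1 hQb).diag_nonneg (i := i)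
  simp only [sub_apply, smul_apply, one_apply_eq, smul_eq_mul, mul_one, sub_nonneg] at hl hu
  exact ⟨hl, hu⟩

lemma smul_one_le_diagonal_iff {a : ℝ} {c : ι → ℝ} : a • 1 ≤ diagonal c ↔ ∀ i, a ≤ c i := by
  simp [le_iff, smul_one_eq_diagonal, diagonal_sub]

lemma diagonal_le_smul_one_iff {b : ℝ} {c : ι → ℝ} : diagonal c ≤ b • 1 ↔ ∀ i, c i ≤ b := by
  simp [le_iff, smul_one_eq_diagonal, diagonal_sub]

variable [Fintype ι]

namespace IsHermitian

variable {R : Matrix ι ι ℝ} (hR : R.IsHermitian)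

lemma trace_mul_eq_sum_eigenvalues (P : Matrix ι ι ℝ) :
    (P * R).trace = ∑ i, (star (hR.eigenvectorUnitary : Matrix ι ι ℝ) * P *
      hR.eigenvectorUnitary) i i * hR.eigenvalues i := by
  set U : Matrix ι ι ℝ := ↑hR.eigenvectorUnitary
  have hR' : R = U * diagonal hR.eigenvalues * star U := by simpa using hR.spectral_theorem
  calc (P * R).trace = (P * U * diagonal hR.eigenvalues * star U).trace := by
        conv_lhs => rw [hR']
        simp only [Matrix.mul_assoc]
    _ = (star U * P * U * diagonal hR.eigenvalues).trace := by
        rw [trace_mul_comm]; simp only [Matrix.mul_assoc]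
    _ = _ := by simp [trace, mul_diagonal]

theorem setOf_trace_mul_eq_image (a b : ℝ) :
    {x | ∃ P : Matrix ι ι ℝ, P.IsSymm ∧ a • 1 ≤ P ∧ P ≤ b • 1 ∧ x = (P * R).trace} =
      (fun c ↦ ∑ i, c i * hR.eigenvalues i) '' univ.pi fun _ ↦ Icc a b := by
  set U : Matrix ι ι ℝ := ↑hR.eigenvectorUnitary
  ext x
  constructor
  · rintro ⟨P, -, haP, hPb, rfl⟩
    refine ⟨fun i ↦ (star U * P * U) i i, fun i _ ↦ diag_mem_Icc_of_le ?_ ?_ i,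
      (hR.trace_mul_eq_sum_eigenvalues P).symm⟩
    · simpa [U] using star_left_conjugate_le_conjugate haP U
    · simpa [U] using star_left_conjugate_le_conjugate hPb U
  · rintro ⟨c, hc, rfl⟩
    refine ⟨U * diagonal c * star U, ?_, ?_, ?_, ?_⟩
    · simpa [star_eq_conjTranspose] using
        isHermitian_mul_mul_conjTranspose U (isHermitian_diagonal c)
    · simpa [U] using star_right_conjugate_le_conjugate
        (smul_one_le_diagonal_iff.2 fun i ↦ (hc i trivial).1) U
    · simpa [U] using star_right_conjugate_le_conjugate
        (diagonal_le_smul_one_iff.2 fun i ↦ (hc i trivial).2) U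
    · have hUU : star U * U = 1 := Unitary.coe_star_mul_self _
      have hconj : star U * (U * diagonal c * star U) * U = diagonal c := by
        simp only [Matrix.mul_assoc, hUU, Matrix.mul_one, ← Matrix.mul_assoc _ U, Matrix.one_mul]
      rw [hR.trace_mul_eq_sum_eigenvalues, hconj]
      simp

end IsHermitian
end Matrix

section Pucci

variable {n : ℕ} {R : Matrix (Fin n) (Fin n) ℝ} (hR : R.IsHermitian) (a b : ℝ)

lemma pucciMinus_eq_sum :
    pucciMinus R a b = ∑ i, (a * max (hR.eigenvalues i) 0 + b * min (hR.eigenvalues i) 0) := by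
  rw [pucciMinus, dif_pos hR, Finset.mul_sum, Finset.mul_sum, ← Finset.sum_add_distrib]

lemma pucciPlus_eq_sum :
    pucciPlus R a b = ∑ i, (a * min (hR.eigenvalues i) 0 + b * max (hR.eigenvalues i) 0) := by
  rw [pucciPlus, dif_pos hR, Finset.mul_sum, Finset.mul_sum, ← Finset.sum_add_distrib]

end Pucci

theorem pucci_isGLB_isLUB_general {n : ℕ} (a b : ℝ) (hab : a ≤ b)
    (R : Matrix (Fin n) (Fin n) ℝ) (hR : R.IsSymm) :
    IsGLB {x : ℝ | ∃ P : Matrix (Fin n) (Fin n) ℝ, P.IsSymm ∧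
        (P - a • (1 : Matrix (Fin n) (Fin n) ℝ)).PosSemidef ∧
        (b • (1 : Matrix (Fin n) (Fin n) ℝ) - P).PosSemidef ∧ x = (P * R).trace}
      (pucciMinus R a b) ∧
    IsLUB {x : ℝ | ∃ P : Matrix (Fin n) (Fin n) ℝ, P.IsSymm ∧
        (P - a • (1 : Matrix (Fin n) (Fin n) ℝ)).PosSemidef ∧
        (b • (1 : Matrix (Fin n) (Fin n) ℝ) - P).PosSemidef ∧ x = (P * R).trace}
      (pucciPlus R a b) := by
  have hRh : R.IsHermitian := isHermitian_iff_isSymm.2 hR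
  have hS := hRh.setOf_trace_mul_eq_image a b
  simp only [le_iff] at hS
  rw [hS, pucciMinus_eq_sum hRh, pucciPlus_eq_sum hRh]
  exact ⟨(isLeast_image_sum_mul_pi_Icc hab _).isGLB,
    (isGreatest_image_sum_mul_pi_Icc hab _).isLUB⟩

/-- The Pucci extremal operators are the infimum resp. supremum of `tr(P R)` over all
symmetric matrices `P` with `a I ≤ P ≤ b I` (in the Loewner order). -/
theorem pucci_isGLB_isLUB {n : ℕ} (hn : 1 ≤ n) (a b : ℝ) (ha : 0 < a) (hab : a ≤ b)
    (R : Matrix (Fin n) (Fin n) ℝ) (hR : R.IsSymm) :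
    IsGLB {x : ℝ | ∃ P : Matrix (Fin n) (Fin n) ℝ, P.IsSymm ∧
        (P - a • (1 : Matrix (Fin n) (Fin n) ℝ)).PosSemidef ∧
        (b • (1 : Matrix (Fin n) (Fin n) ℝ) - P).PosSemidef ∧ x = (P * R).trace}
      (pucciMinus R a b) ∧
    IsLUB {x : ℝ | ∃ P : Matrix (Fin n) (Fin n) ℝ, P.IsSymm ∧
        (P - a • (1 : Matrix (Fin n) (Fin n) ℝ)).PosSemidef ∧
        (b • (1 : Matrix (Fin n) (Fin n) ℝ) - P).PosSemidef ∧ x = (P * R).trace}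
      (pucciPlus R a b) :=
  pucci_isGLB_isLUB_general a b hab R hR
end

section
/- Let n ≥ 1, 0 < a ≤ b, M ≥ 1, and let A be an n×n real matrix with M⁻²I ≤ AᵀA ≤ M²I (i.e. all singular values of A lie in [M⁻¹, M]). Then for every n×n real symmetric matrix R: P⁻(R, a/M², bM²) ≤ P⁻(AᵀRA, a, b) and P⁺(AᵀRA, a, b) ≤ P⁺(R, a/M², bM²). -/
open Set

section Aux

open Matrix

variable {n : ℕ}

private lemma cs_dot (u v : Fin n → ℝ) : (u ⬝ᵥ v) ^ 2 ≤ (u ⬝ᵥ u) * (v ⬝ᵥ v) := by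
  have h := Finset.sum_mul_sq_le_sq_mul_sq Finset.univ u v
  simpa [dotProduct, pow_two] using h

private lemma dot_nonneg' (u : Fin n → ℝ) : (0:ℝ) ≤ u ⬝ᵥ u :=
  Finset.sum_nonneg fun _ _ => mul_self_nonneg _

private lemma quad_eq (A : Matrix (Fin n) (Fin n) ℝ) (x : Fin n → ℝ) :
    x ⬝ᵥ ((Aᵀ * A) *ᵥ x) = (A *ᵥ x) ⬝ᵥ (A *ᵥ x) := by
  rw [← Matrix.mulVec_mulVec, Matrix.dotProduct_mulVec, vecMul_transpose]

private lemma entry_eq (U T : Matrix (Fin n) (Fin n) ℝ) (i : Fin n) :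
    (star U * T * U) i i = (fun k => U k i) ⬝ᵥ (T *ᵥ fun k => U k i) := by
  simp only [Matrix.star_eq_conjTranspose, Matrix.mul_apply, Matrix.conjTranspose_apply,
    star_trivial, dotProduct, Matrix.mulVec, Finset.sum_mul, Finset.mul_sum]
  rw [Finset.sum_comm]
  congr 1; ext j; congr 1; ext k; ring

private lemma col_unit (U : Matrix (Fin n) (Fin n) ℝ) (hU : star U * U = 1) (i : Fin n) :
    (fun k => U k i) ⬝ᵥ (fun k => U k i) = 1 := by
  have h := congrArg (fun B => B i i) hU
  simp only [Matrix.mul_apply, Matrix.one_apply_eq, Matrix.star_eq_conjTranspose,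
    Matrix.conjTranspose_apply, star_trivial] at h
  simpa [dotProduct] using h

private lemma form_bounds {α β : ℝ} {T : Matrix (Fin n) (Fin n) ℝ}
    (h1 : (T - α • (1 : Matrix (Fin n) (Fin n) ℝ)).PosSemidef)
    (h2 : (β • (1 : Matrix (Fin n) (Fin n) ℝ) - T).PosSemidef) (x : Fin n → ℝ) :
    α * (x ⬝ᵥ x) ≤ x ⬝ᵥ (T *ᵥ x) ∧ x ⬝ᵥ (T *ᵥ x) ≤ β * (x ⬝ᵥ x) := by
  have e1 := h1.dotProduct_mulVec_nonneg x
  have e2 := h2.dotProduct_mulVec_nonneg x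
  simp only [star_trivial, sub_mulVec, smul_mulVec, one_mulVec, dotProduct_sub,
    dotProduct_smul, smul_eq_mul] at e1 e2
  constructor <;> linarith

private lemma trace_bounds (R : Matrix (Fin n) (Fin n) ℝ) (hR : R.IsHermitian)
    (α β : ℝ) (T : Matrix (Fin n) (Fin n) ℝ)
    (h1 : (T - α • (1 : Matrix (Fin n) (Fin n) ℝ)).PosSemidef)
    (h2 : (β • (1 : Matrix (Fin n) (Fin n) ℝ) - T).PosSemidef) :
    pucciMinus R α β ≤ (T * R).trace ∧ (T * R).trace ≤ pucciPlus R α β := by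
  set U : Matrix (Fin n) (Fin n) ℝ := (hR.eigenvectorUnitary : Matrix (Fin n) (Fin n) ℝ)
  have hUU : star U * U = 1 := Unitary.star_mul_self_of_mem hR.eigenvectorUnitary.2
  have hspec : R = U * Matrix.diagonal hR.eigenvalues * star U := by
    have := hR.spectral_theorem
    simpa [RCLike.ofReal_real_eq_id] using this
  have htr : (T * R).trace = ∑ i, (star U * T * U) i i * hR.eigenvalues i := by
    calc (T * R).trace = (T * (U * Matrix.diagonal hR.eigenvalues * star U)).trace := by
          rw [← hspec]
    _ = ((T * U * Matrix.diagonal hR.eigenvalues) * star U).trace := by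
          rw [mul_assoc, mul_assoc, mul_assoc]
    _ = (star U * (T * U * Matrix.diagonal hR.eigenvalues)).trace := by
          rw [Matrix.trace_mul_comm]
    _ = ((star U * T * U) * Matrix.diagonal hR.eigenvalues).trace := by
          rw [← mul_assoc, ← mul_assoc]
    _ = ∑ i, (star U * T * U) i i * hR.eigenvalues i := by
          simp [Matrix.trace, Matrix.diag, Matrix.mul_diagonal]
  have hentry : ∀ i, α ≤ (star U * T * U) i i ∧ (star U * T * U) i i ≤ β := by
    intro i
    have hf := form_bounds h1 h2 (fun k => U k i)
    rw [col_unit U hUU i] at hf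
    rw [entry_eq U T i]
    constructor <;> linarith [hf.1, hf.2]
  rw [pucciMinus, pucciPlus, dif_pos hR, dif_pos hR, htr]
  constructor
  · rw [Finset.mul_sum, Finset.mul_sum, ← Finset.sum_add_distrib]
    apply Finset.sum_le_sum
    intro i _
    obtain ⟨hl, hu⟩ := hentry i
    rcases le_total 0 (hR.eigenvalues i) with h | h
    · rw [max_eq_left h, min_eq_right h]; nlinarith
    · rw [max_eq_right h, min_eq_left h]; nlinarith
  · rw [Finset.mul_sum, Finset.mul_sum, ← Finset.sum_add_distrib]
    apply Finset.sum_le_sum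
    intro i _
    obtain ⟨hl, hu⟩ := hentry i
    rcases le_total 0 (hR.eigenvalues i) with h | h
    · rw [max_eq_left h, min_eq_right h]; nlinarith
    · rw [max_eq_right h, min_eq_left h]; nlinarith

private lemma achieve (X : Matrix (Fin n) (Fin n) ℝ) (hX : X.IsHermitian) (a b : ℝ)
    (s : Fin n → ℝ) (hs : ∀ i, a ≤ s i ∧ s i ≤ b) :
    ∃ S : Matrix (Fin n) (Fin n) ℝ, (S - a • 1).PosSemidef ∧ (b • 1 - S).PosSemidef ∧
      (S * X).trace = ∑ i, s i * hX.eigenvalues i := by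
  set U : Matrix (Fin n) (Fin n) ℝ := (hX.eigenvectorUnitary : Matrix (Fin n) (Fin n) ℝ)
  have hUU : star U * U = 1 := Unitary.star_mul_self_of_mem hX.eigenvectorUnitary.2
  have hUU' : U * star U = 1 := Unitary.mul_star_self_of_mem hX.eigenvectorUnitary.2
  have hspec : X = U * Matrix.diagonal hX.eigenvalues * star U := by
    have := hX.spectral_theorem
    simpa [RCLike.ofReal_real_eq_id] using this
  refine ⟨U * Matrix.diagonal s * star U, ?_, ?_, ?_⟩
  · have key : U * Matrix.diagonal s * star U - a • 1
        = U * Matrix.diagonal (fun i => s i - a) * star U := by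
      have : Matrix.diagonal (fun i => s i - a)
          = Matrix.diagonal s - a • (1 : Matrix (Fin n) (Fin n) ℝ) := by
        ext i j
        by_cases h : i = j <;> simp [Matrix.diagonal, h, Matrix.one_apply]
      rw [this, mul_sub, sub_mul, Matrix.mul_smul, mul_one, Matrix.smul_mul, hUU']
    rw [key, Matrix.star_eq_conjTranspose]
    exact (Matrix.posSemidef_diagonal_iff.mpr fun i => by
      linarith [(hs i).1]).mul_mul_conjTranspose_same U
  · have key : b • (1 : Matrix (Fin n) (Fin n) ℝ) - U * Matrix.diagonal s * star U
        = U * Matrix.diagonal (fun i => b - s i) * star U := by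
      have : Matrix.diagonal (fun i => b - s i)
          = b • (1 : Matrix (Fin n) (Fin n) ℝ) - Matrix.diagonal s := by
        ext i j
        by_cases h : i = j <;> simp [Matrix.diagonal, h, Matrix.one_apply]
      rw [this, mul_sub, sub_mul, Matrix.mul_smul, mul_one, Matrix.smul_mul, hUU']
    rw [key, Matrix.star_eq_conjTranspose]
    exact (Matrix.posSemidef_diagonal_iff.mpr fun i => by
      linarith [(hs i).2]).mul_mul_conjTranspose_same U
  · conv_lhs => rw [hspec]
    have : U * Matrix.diagonal s * star U * (U * Matrix.diagonal hX.eigenvalues * star U)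
        = U * (Matrix.diagonal s * Matrix.diagonal hX.eigenvalues) * star U := by
      calc U * Matrix.diagonal s * star U * (U * Matrix.diagonal hX.eigenvalues * star U)
          = U * Matrix.diagonal s * (star U * U) * Matrix.diagonal hX.eigenvalues * star U := by
            simp only [mul_assoc]
        _ = U * (Matrix.diagonal s * Matrix.diagonal hX.eigenvalues) * star U := by
            rw [hUU, mul_one]; simp only [mul_assoc]
    rw [this, Matrix.trace_mul_comm, ← mul_assoc, hUU, one_mul,
      Matrix.diagonal_mul_diagonal, Matrix.trace_diagonal]

private lemma tform_bounds (M : ℝ) (hM : 1 ≤ M) (A : Matrix (Fin n) (Fin n) ℝ)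
    (hlow : (Aᵀ * A - (M ^ 2)⁻¹ • (1 : Matrix (Fin n) (Fin n) ℝ)).PosSemidef)
    (hupp : ((M ^ 2) • (1 : Matrix (Fin n) (Fin n) ℝ) - Aᵀ * A).PosSemidef)
    (x : Fin n → ℝ) :
    (M ^ 2)⁻¹ * (x ⬝ᵥ x) ≤ (Aᵀ *ᵥ x) ⬝ᵥ (Aᵀ *ᵥ x) ∧
      (Aᵀ *ᵥ x) ⬝ᵥ (Aᵀ *ᵥ x) ≤ M ^ 2 * (x ⬝ᵥ x) := by
  have hM2 : (0:ℝ) < M ^ 2 := by positivity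
  have h1 : ∀ z : Fin n → ℝ, (M ^ 2)⁻¹ * (z ⬝ᵥ z) ≤ (A *ᵥ z) ⬝ᵥ (A *ᵥ z) := by
    intro z
    have := hlow.dotProduct_mulVec_nonneg z
    simp only [star_trivial, sub_mulVec, smul_mulVec, one_mulVec, dotProduct_sub,
      dotProduct_smul, smul_eq_mul] at this
    rw [quad_eq] at this
    linarith
  have h2 : ∀ z : Fin n → ℝ, (A *ᵥ z) ⬝ᵥ (A *ᵥ z) ≤ M ^ 2 * (z ⬝ᵥ z) := by
    intro z
    have := hupp.dotProduct_mulVec_nonneg z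
    simp only [star_trivial, sub_mulVec, smul_mulVec, one_mulVec, dotProduct_sub,
      dotProduct_smul, smul_eq_mul] at this
    rw [quad_eq] at this
    linarith
  have hpd : (Aᵀ * A).PosDef := by
    apply Matrix.PosDef.of_dotProduct_mulVec_pos
    · have := Matrix.isHermitian_conjTranspose_mul_self A
      rwa [Matrix.conjTranspose_eq_transpose_of_trivial] at this
    · intro z hz
      rw [star_trivial, quad_eq]
      have hz2 : 0 < z ⬝ᵥ z := by
        rcases (dot_nonneg' z).lt_or_eq with h | h
        · exact h
        · exact absurd (dotProduct_self_eq_zero.mp h.symm) hz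
      have := h1 z
      nlinarith [inv_pos.mpr hM2]
  have hdet : IsUnit A.det := by
    have hpos := hpd.det_pos
    rw [Matrix.det_mul, Matrix.det_transpose] at hpos
    exact (mul_self_pos.mp hpos).isUnit
  have hAB : A * A⁻¹ = 1 := Matrix.mul_nonsing_inv A hdet
  set y := Aᵀ *ᵥ x with hy
  constructor
  · set z := A⁻¹ *ᵥ x with hzdef
    have hAz : A *ᵥ z = x := by rw [hzdef, Matrix.mulVec_mulVec, hAB, Matrix.one_mulVec]
    have hinv : (M ^ 2)⁻¹ * M ^ 2 = 1 := inv_mul_cancel₀ hM2.ne'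
    have hz : z ⬝ᵥ z ≤ M ^ 2 * (x ⬝ᵥ x) := by
      have h := h1 z
      rw [hAz] at h
      calc z ⬝ᵥ z = M ^ 2 * ((M ^ 2)⁻¹ * (z ⬝ᵥ z)) := by
            rw [← mul_assoc, mul_inv_cancel₀ hM2.ne', one_mul]
        _ ≤ M ^ 2 * (x ⬝ᵥ x) := mul_le_mul_of_nonneg_left h hM2.le
    have hkey : x ⬝ᵥ x = y ⬝ᵥ z := by
      have h : x ⬝ᵥ x = x ⬝ᵥ (A *ᵥ z) := by rw [hAz]
      rw [h, Matrix.dotProduct_mulVec, ← Matrix.mulVec_transpose]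
    have hcs := cs_dot y z
    rw [← hkey] at hcs
    rcases (dot_nonneg' x).lt_or_eq with hx | hx
    · have step1 : (x ⬝ᵥ x) * (x ⬝ᵥ x) ≤ ((y ⬝ᵥ y) * M ^ 2) * (x ⬝ᵥ x) :=
        calc (x ⬝ᵥ x) * (x ⬝ᵥ x) = (x ⬝ᵥ x) ^ 2 := (pow_two _).symm
          _ ≤ (y ⬝ᵥ y) * (z ⬝ᵥ z) := hcs
          _ ≤ (y ⬝ᵥ y) * (M ^ 2 * (x ⬝ᵥ x)) := mul_le_mul_of_nonneg_left hz (dot_nonneg' y)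
          _ = ((y ⬝ᵥ y) * M ^ 2) * (x ⬝ᵥ x) := by ring
      have step2 : x ⬝ᵥ x ≤ (y ⬝ᵥ y) * M ^ 2 := le_of_mul_le_mul_right step1 hx
      calc (M ^ 2)⁻¹ * (x ⬝ᵥ x) ≤ (M ^ 2)⁻¹ * ((y ⬝ᵥ y) * M ^ 2) :=
            mul_le_mul_of_nonneg_left step2 (inv_nonneg.mpr hM2.le)
        _ = (y ⬝ᵥ y) * ((M ^ 2)⁻¹ * M ^ 2) := by ring
        _ = y ⬝ᵥ y := by rw [hinv, mul_one]
    · rw [← hx, mul_zero]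
      exact dot_nonneg' y
  · have hkey : y ⬝ᵥ y = x ⬝ᵥ (A *ᵥ y) := by
      have h : y ⬝ᵥ y = (Aᵀ *ᵥ x) ⬝ᵥ y := by rw [← hy]
      rw [h, Matrix.mulVec_transpose, ← Matrix.dotProduct_mulVec]
    have hcs := cs_dot x (A *ᵥ y)
    rw [← hkey] at hcs
    have h2y := h2 y
    rcases (dot_nonneg' y).lt_or_eq with hyy | hyy
    · have step1 : (y ⬝ᵥ y) * (y ⬝ᵥ y) ≤ (M ^ 2 * (x ⬝ᵥ x)) * (y ⬝ᵥ y) :=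
        calc (y ⬝ᵥ y) * (y ⬝ᵥ y) = (y ⬝ᵥ y) ^ 2 := (pow_two _).symm
          _ ≤ (x ⬝ᵥ x) * ((A *ᵥ y) ⬝ᵥ (A *ᵥ y)) := hcs
          _ ≤ (x ⬝ᵥ x) * (M ^ 2 * (y ⬝ᵥ y)) := mul_le_mul_of_nonneg_left h2y (dot_nonneg' x)
          _ = (M ^ 2 * (x ⬝ᵥ x)) * (y ⬝ᵥ y) := by ring
      exact le_of_mul_le_mul_right step1 hyy
    · rw [← hyy]
      exact mul_nonneg hM2.le (dot_nonneg' x)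

private lemma conj_feasible (a b M : ℝ) (ha : 0 < a) (hb : 0 < b) (hM2 : (0:ℝ) < M ^ 2)
    (A S : Matrix (Fin n) (Fin n) ℝ)
    (hg : ∀ x : Fin n → ℝ, (M ^ 2)⁻¹ * (x ⬝ᵥ x) ≤ (Aᵀ *ᵥ x) ⬝ᵥ (Aᵀ *ᵥ x) ∧
      (Aᵀ *ᵥ x) ⬝ᵥ (Aᵀ *ᵥ x) ≤ M ^ 2 * (x ⬝ᵥ x))
    (hS1 : (S - a • 1).PosSemidef) (hS2 : (b • 1 - S).PosSemidef) :
    (A * S * Aᵀ - (a / M ^ 2) • 1).PosSemidef ∧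
      ((b * M ^ 2) • (1 : Matrix (Fin n) (Fin n) ℝ) - A * S * Aᵀ).PosSemidef := by
  have hc1 : ∀ c : ℝ, ((c • (1 : Matrix (Fin n) (Fin n) ℝ))).IsHermitian := fun c => by
    simp [Matrix.IsHermitian]
  have hSH : S.IsHermitian := by
    have h := hS1.1
    have h2 : S = (S - a • 1) + a • 1 := by rw [sub_add_cancel]
    rw [h2]
    exact h.add (hc1 a)
  have hSt : Sᵀ = S := by
    have := hSH
    rwa [Matrix.IsHermitian, Matrix.conjTranspose_eq_transpose_of_trivial] at this
  have hTH : (A * S * Aᵀ).IsHermitian := by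
    rw [Matrix.IsHermitian, Matrix.conjTranspose_eq_transpose_of_trivial, Matrix.transpose_mul,
      Matrix.transpose_mul, Matrix.transpose_transpose, hSt, mul_assoc]
  have hform : ∀ x : Fin n → ℝ,
      x ⬝ᵥ ((A * S * Aᵀ) *ᵥ x) = (Aᵀ *ᵥ x) ⬝ᵥ (S *ᵥ (Aᵀ *ᵥ x)) := by
    intro x
    rw [← Matrix.mulVec_mulVec, ← Matrix.mulVec_mulVec, Matrix.dotProduct_mulVec,
      ← Matrix.mulVec_transpose]
  constructor
  · refine Matrix.PosSemidef.of_dotProduct_mulVec_nonneg (hTH.sub (hc1 _)) ?_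
    intro x
    rw [star_trivial]
    simp only [Matrix.sub_mulVec, Matrix.smul_mulVec, Matrix.one_mulVec,
      dotProduct_sub, dotProduct_smul, smul_eq_mul]
    rw [hform x]
    have h1 := (form_bounds hS1 hS2 (Aᵀ *ᵥ x)).1
    have h2 := (hg x).1
    have h3 := mul_le_mul_of_nonneg_left h2 ha.le
    rw [div_eq_mul_inv]
    nlinarith
  · refine Matrix.PosSemidef.of_dotProduct_mulVec_nonneg ((hc1 _).sub hTH) ?_
    intro x
    rw [star_trivial]
    simp only [Matrix.sub_mulVec, Matrix.smul_mulVec, Matrix.one_mulVec,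
      dotProduct_sub, dotProduct_smul, smul_eq_mul]
    rw [hform x]
    have h1 := (form_bounds hS1 hS2 (Aᵀ *ᵥ x)).2
    have h2 := (hg x).2
    have h3 := mul_le_mul_of_nonneg_left h2 hb.le
    nlinarith

end Aux

open Matrix in
/-- If all singular values of `A` lie in `[M⁻¹, M]` (i.e. `M⁻² I ≤ AᵀA ≤ M² I`), then
`P⁻(R, a/M², bM²) ≤ P⁻(AᵀRA, a, b)` and `P⁺(AᵀRA, a, b) ≤ P⁺(R, a/M², bM²)`. -/
theorem pucci_conjugation_bounds {n : ℕ} (hn : 1 ≤ n) (a b M : ℝ)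
    (ha : 0 < a) (hab : a ≤ b) (hM : 1 ≤ M)
    (A : Matrix (Fin n) (Fin n) ℝ)
    (hlow : (Aᵀ * A - (M ^ 2)⁻¹ • (1 : Matrix (Fin n) (Fin n) ℝ)).PosSemidef)
    (hupp : ((M ^ 2) • (1 : Matrix (Fin n) (Fin n) ℝ) - Aᵀ * A).PosSemidef)
    (R : Matrix (Fin n) (Fin n) ℝ) (hR : R.IsSymm) :
    pucciMinus R (a / M ^ 2) (b * M ^ 2) ≤ pucciMinus (Aᵀ * R * A) a b ∧
    pucciPlus (Aᵀ * R * A) a b ≤ pucciPlus R (a / M ^ 2) (b * M ^ 2) := by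
  have hb : 0 < b := lt_of_lt_of_le ha hab
  have hM2 : (0:ℝ) < M ^ 2 := by positivity
  have hRH : R.IsHermitian := by
    rwa [Matrix.IsHermitian, Matrix.conjTranspose_eq_transpose_of_trivial]
  have hXH : (Aᵀ * R * A).IsHermitian := by
    rw [Matrix.IsHermitian, Matrix.conjTranspose_eq_transpose_of_trivial, Matrix.transpose_mul,
      Matrix.transpose_mul, Matrix.transpose_transpose, hR.eq, ← mul_assoc]
  have hg := tform_bounds M hM A hlow hupp
  constructor
  · -- minus part
    set s : Fin n → ℝ := fun i => if 0 < hXH.eigenvalues i then a else b with hsdef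
    have hs : ∀ i, a ≤ s i ∧ s i ≤ b := by
      intro i
      rw [hsdef]
      dsimp only
      split_ifs <;> constructor <;> linarith
    obtain ⟨S, hS1, hS2, htr⟩ := achieve _ hXH a b s hs
    have hsum : ∑ i, s i * hXH.eigenvalues i
        = a * ∑ i, max (hXH.eigenvalues i) 0 + b * ∑ i, min (hXH.eigenvalues i) 0 := by
      rw [Finset.mul_sum, Finset.mul_sum, ← Finset.sum_add_distrib]
      apply Finset.sum_congr rfl
      intro i _
      rw [hsdef]
      dsimp only
      split_ifs with h
      · rw [max_eq_left h.le, min_eq_right h.le]; ring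
      · push_neg at h
        rw [max_eq_right h, min_eq_left h]; ring
    have heq : pucciMinus (Aᵀ * R * A) a b = (S * (Aᵀ * R * A)).trace := by
      rw [pucciMinus, dif_pos hXH, htr, hsum]
    have hcyc : (S * (Aᵀ * R * A)).trace = ((A * S * Aᵀ) * R).trace := by
      rw [show S * (Aᵀ * R * A) = (S * Aᵀ * R) * A by simp only [mul_assoc],
        Matrix.trace_mul_comm, show A * (S * Aᵀ * R) = (A * S * Aᵀ) * R by simp only [mul_assoc]]
    obtain ⟨hf1, hf2⟩ := conj_feasible a b M ha hb hM2 A S hg hS1 hS2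
    have := (trace_bounds R hRH (a / M ^ 2) (b * M ^ 2) (A * S * Aᵀ) hf1 hf2).1
    rw [heq, hcyc]
    exact this
  · -- plus part
    set s : Fin n → ℝ := fun i => if 0 < hXH.eigenvalues i then b else a with hsdef
    have hs : ∀ i, a ≤ s i ∧ s i ≤ b := by
      intro i
      rw [hsdef]
      dsimp only
      split_ifs <;> constructor <;> linarith
    obtain ⟨S, hS1, hS2, htr⟩ := achieve _ hXH a b s hs
    have hsum : ∑ i, s i * hXH.eigenvalues i
        = a * ∑ i, min (hXH.eigenvalues i) 0 + b * ∑ i, max (hXH.eigenvalues i) 0 := by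
      rw [Finset.mul_sum, Finset.mul_sum, ← Finset.sum_add_distrib]
      apply Finset.sum_congr rfl
      intro i _
      rw [hsdef]
      dsimp only
      split_ifs with h
      · rw [max_eq_left h.le, min_eq_right h.le]; ring
      · push_neg at h
        rw [max_eq_right h, min_eq_left h]; ring
    have heq : pucciPlus (Aᵀ * R * A) a b = (S * (Aᵀ * R * A)).trace := by
      rw [pucciPlus, dif_pos hXH, htr, hsum]
    have hcyc : (S * (Aᵀ * R * A)).trace = ((A * S * Aᵀ) * R).trace := by
      rw [show S * (Aᵀ * R * A) = (S * Aᵀ * R) * A by simp only [mul_assoc],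
        Matrix.trace_mul_comm, show A * (S * Aᵀ * R) = (A * S * Aᵀ) * R by simp only [mul_assoc]]
    obtain ⟨hf1, hf2⟩ := conj_feasible a b M ha hb hM2 A S hg hS1 hS2
    have := (trace_bounds R hRH (a / M ^ 2) (b * M ^ 2) (A * S * Aᵀ) hf1 hf2).2
    rw [heq, hcyc]
    exact this
end
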